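/- arXiv:2402.18916 — 2 statements merged into one kernel-verified Lean document; each statement's English description precedes it below -/
import Mathlib

section
/- For all integers p, q, r, the Laurent polynomial (T + 2 + T⁻¹) divides (T + 1 + T⁻¹)·(−T^{−2(p+q+r+2)} − T^{−2(p+q+r+1)} + T^{−2(p+q+1)} + T^{−2(q+r+1)} + T^{−2(r+p+1)}) + 1 in the ring of Laurent polynomials ℤ[T, T⁻¹]. -/
/-!
Since `T + 2 + T⁻¹ = T⁻¹ (T + 1)²` divides `(T² - 1)²`, the first-order expansion of
`u ^ a` around `u = 1`, applied to `u = T²`, gives `T^(2a) ≡ 1 + a (T² - 1)` modulo `T + 2 + T⁻¹`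
for every integer `a`. The five signed exponents sum to zero, so the bracket is `≡ 1`, and the
whole expression is `≡ (T + 1 + T⁻¹) + 1 ≡ 0`.
-/

open LaurentPolynomial

theorem Units.sub_one_sq_dvd_zpow_sub_one_sub {R : Type*} [CommRing R] (u : Rˣ) (n : ℤ) :
    ((u : R) - 1) ^ 2 ∣ ((u ^ n : Rˣ) : R) - 1 - n * ((u : R) - 1) := by
  induction n using Int.induction_on with
  | zero => simp
  | succ n ih =>
    obtain ⟨c, hc⟩ := ih
    refine ⟨u * c + n, ?_⟩
    rw [zpow_add_one, Units.val_mul]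
    push_cast at hc ⊢
    linear_combination (u : R) * hc
  | pred n ih =>
    obtain ⟨c, hc⟩ := ih
    refine ⟨((u⁻¹ : Rˣ) : R) * (c + (n + 1)), ?_⟩
    rw [zpow_sub_one, Units.val_mul]
    push_cast at hc ⊢
    linear_combination ((u⁻¹ : Rˣ) : R) * hc + (n + 2 - (n + 1) * (u : R)) * u.mul_inv

theorem LaurentPolynomial.val_unit_T_zpow {R : Type*} [CommRing R] (m n : ℤ) :
    (((isUnit_T m).unit ^ n : (LaurentPolynomial R)ˣ) : LaurentPolynomial R) = T (m * n) := by
  induction n using Int.induction_on with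
  | zero => simp [T_zero]
  | succ n ih => rw [zpow_add_one, Units.val_mul, ih, IsUnit.unit_spec, mul_add_one, T_add]
  | pred n ih =>
    rw [zpow_sub_one, Units.val_mul, ih, Units.mul_inv_eq_iff_eq_mul, IsUnit.unit_spec, ← T_add]
    ring_nf

theorem LaurentPolynomial.T_one_add_two_add_T_neg_one_dvd {R : Type*} [CommRing R] (n : ℤ) :
    (T 1 + 2 + T (-1) : R[T;T⁻¹]) ∣ T (2 * n) - 1 - (n : R[T;T⁻¹]) * (T 2 - 1) := by
  have h := (isUnit_T (R := R) 2).unit.sub_one_sq_dvd_zpow_sub_one_sub n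
  rw [val_unit_T_zpow, IsUnit.unit_spec] at h
  refine dvd_trans ⟨T 1 * (T 1 - 1) ^ 2, ?_⟩ h
  have hT : (T (-1) * T 1 : R[T;T⁻¹]) = 1 := by rw [← T_add, neg_add_cancel, T_zero]
  rw [show (2 : ℤ) = 1 + 1 from rfl, T_add]
  linear_combination (-(T 1 - 1) ^ 2 : R[T;T⁻¹]) * hT

theorem stmt_1 (p q r : ℤ) :
    (T 1 + 2 + T (-1) : LaurentPolynomial ℤ) ∣
      (T 1 + 1 + T (-1)) *
        (-(T (-2 * (p + q + r + 2))) - T (-2 * (p + q + r + 1)) +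
          T (-2 * (p + q + 1)) + T (-2 * (q + r + 1)) + T (-2 * (r + p + 1))) + 1 := by
  simp only [neg_mul, ← mul_neg]
  obtain ⟨c₁, h₁⟩ := T_one_add_two_add_T_neg_one_dvd (R := ℤ) (-(p + q + r + 2))
  obtain ⟨c₂, h₂⟩ := T_one_add_two_add_T_neg_one_dvd (R := ℤ) (-(p + q + r + 1))
  obtain ⟨c₃, h₃⟩ := T_one_add_two_add_T_neg_one_dvd (R := ℤ) (-(p + q + 1))
  obtain ⟨c₄, h₄⟩ := T_one_add_two_add_T_neg_one_dvd (R := ℤ) (-(q + r + 1))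
  obtain ⟨c₅, h₅⟩ := T_one_add_two_add_T_neg_one_dvd (R := ℤ) (-(r + p + 1))
  set S : LaurentPolynomial ℤ := T 1 + 1 + T (-1)
  refine ⟨S * (-c₁ - c₂ + c₃ + c₄ + c₅) + 1, ?_⟩
  push_cast at h₁ h₂ h₃ h₄ h₅
  linear_combination S * (-h₁ - h₂ + h₃ + h₄ + h₅)
end

section
/- For all integers p, q, r, the group presented as ⟨A, B, C, D, E | A(EB) = (EB)A, (CA)B = B(CA), (CDC⁻¹B)C = C(CDC⁻¹B), CDC⁻¹ = E⁻¹DE, AEA⁻¹ = D⁻¹ED, Aᵖ = (EB)⁻¹, B = (CA)^{q+1}, Cʳ = (CDC⁻¹B)⁻¹⟩ is isomorphic to the two-generator one-relator group ⟨A, C | Aᵖ(AC)^{q+1}Cʳ = Cʳ(CA)^{q+1}Aᵖ⟩. -/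
/-- Relators of the Wirtinger presentation of the filled five-chain link complement,
with generators `A, B, C, D, E` indexed by `0, 1, 2, 3, 4 : Fin 5`. -/
def fiveChainRels (p q r : ℤ) : Set (FreeGroup (Fin 5)) :=
  letI A : FreeGroup (Fin 5) := FreeGroup.of 0
  letI B : FreeGroup (Fin 5) := FreeGroup.of 1
  letI C : FreeGroup (Fin 5) := FreeGroup.of 2
  letI D : FreeGroup (Fin 5) := FreeGroup.of 3
  letI E : FreeGroup (Fin 5) := FreeGroup.of 4
  { A * (E * B) * (E * B * A)⁻¹,
    C * A * B * (B * (C * A))⁻¹,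
    C * D * C⁻¹ * B * C * (C * (C * D * C⁻¹ * B))⁻¹,
    C * D * C⁻¹ * (E⁻¹ * D * E)⁻¹,
    A * E * A⁻¹ * (D⁻¹ * E * D)⁻¹,
    A ^ p * (E * B)⁻¹⁻¹,
    B * ((C * A) ^ (q + 1))⁻¹,
    C ^ r * (C * D * C⁻¹ * B)⁻¹⁻¹ }

/-- The relator of the two-generator one-relator group
`⟨A, C | Aᵖ(AC)^{q+1}Cʳ = Cʳ(CA)^{q+1}Aᵖ⟩`, with `A = FreeGroup.of true`,
`C = FreeGroup.of false`. -/
def twoGenRel (p q r : ℤ) : Set (FreeGroup Bool) :=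
  letI A : FreeGroup Bool := FreeGroup.of true
  letI C : FreeGroup Bool := FreeGroup.of false
  {A ^ p * (A * C) ^ (q + 1) * C ^ r * (C ^ r * (C * A) ^ (q + 1) * A ^ p)⁻¹}

private lemma rel_one' {α : Type*} {rels : Set (FreeGroup α)} {w : FreeGroup α} (h : w ∈ rels) :
    PresentedGroup.mk rels w = 1 :=
  (QuotientGroup.eq_one_iff _).mpr (Subgroup.subset_normalClosure h)

private lemma mk_of' {α : Type*} {rels : Set (FreeGroup α)} (x : α) :
    PresentedGroup.mk rels (FreeGroup.of x) = PresentedGroup.of x := rfl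

private lemma mul_zpow_conj' {G : Type*} [Group G] (a b : G) (n : ℤ) :
    (a*b)^n = a*(b*a)^n*a⁻¹ := by
  have h : SemiconjBy a (b*a) (a*b) := by simp [SemiconjBy, mul_assoc]
  have := (h.zpow_right n).eq
  group at this ⊢
  rw [this]; group

set_option maxHeartbeats 2000000 in
theorem stmt_11 (p q r : ℤ) :
    Nonempty (PresentedGroup (fiveChainRels p q r) ≃* PresentedGroup (twoGenRel p q r)) := by
  -- Generators of the five-chain group G
  set A : PresentedGroup (fiveChainRels p q r) := PresentedGroup.of 0 with hA
  set B : PresentedGroup (fiveChainRels p q r) := PresentedGroup.of 1 with hB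
  set C : PresentedGroup (fiveChainRels p q r) := PresentedGroup.of 2 with hC
  set D : PresentedGroup (fiveChainRels p q r) := PresentedGroup.of 3 with hD
  set E : PresentedGroup (fiveChainRels p q r) := PresentedGroup.of 4 with hE
  -- Generators of the two-generator group H
  set a : PresentedGroup (twoGenRel p q r) := PresentedGroup.of true with ha
  set c : PresentedGroup (twoGenRel p q r) := PresentedGroup.of false with hc
  -- relations in G
  have relG : ∀ w ∈ fiveChainRels p q r, PresentedGroup.mk (fiveChainRels p q r) w = 1 :=
    fun w hw => rel_one' hw
  have hG2 : C*A*B = B*(C*A) := by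
    have h := relG _ (Set.mem_insert_of_mem _ (Set.mem_insert _ _))
    simp only [map_mul, map_inv, map_zpow, mk_of', ← hA, ← hB, ← hC, ← hD, ← hE] at h
    exact mul_inv_eq_one.mp h
  have hG5 : A*E*A⁻¹ = D⁻¹*E*D := by
    have h := relG _ (Set.mem_insert_of_mem _ (Set.mem_insert_of_mem _
      (Set.mem_insert_of_mem _ (Set.mem_insert_of_mem _ (Set.mem_insert _ _)))))
    simp only [map_mul, map_inv, map_zpow, mk_of', ← hA, ← hB, ← hC, ← hD, ← hE] at h
    exact mul_inv_eq_one.mp h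
  have hG6 : A^p*(E*B) = 1 := by
    have h := relG _ (Set.mem_insert_of_mem _ (Set.mem_insert_of_mem _
      (Set.mem_insert_of_mem _ (Set.mem_insert_of_mem _ (Set.mem_insert_of_mem _
      (Set.mem_insert _ _))))))
    simp only [map_mul, map_inv, map_zpow, mk_of', inv_inv, ← hA, ← hB, ← hC, ← hD, ← hE] at h
    exact h
  have hG7 : B = (C*A)^(q+1) := by
    have h := relG _ (Set.mem_insert_of_mem _ (Set.mem_insert_of_mem _
      (Set.mem_insert_of_mem _ (Set.mem_insert_of_mem _ (Set.mem_insert_of_mem _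
      (Set.mem_insert_of_mem _ (Set.mem_insert _ _)))))))
    simp only [map_mul, map_inv, map_zpow, mk_of', ← hA, ← hB, ← hC, ← hD, ← hE] at h
    exact mul_inv_eq_one.mp h
  have hG8 : C^r*(C*D*C⁻¹*B) = 1 := by
    have h := relG _ (Set.mem_insert_of_mem _ (Set.mem_insert_of_mem _
      (Set.mem_insert_of_mem _ (Set.mem_insert_of_mem _ (Set.mem_insert_of_mem _
      (Set.mem_insert_of_mem _ (Set.mem_insert_of_mem _ (Set.mem_singleton _))))))))
    simp only [map_mul, map_inv, map_zpow, mk_of', inv_inv, ← hA, ← hB, ← hC, ← hD, ← hE] at h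
    exact h
  -- derived equations in G
  have hEeq : E = A^(-p)*B⁻¹ := by
    calc E = A^(-p)*(A^p*(E*B))*B⁻¹ := by group
      _ = A^(-p)*1*B⁻¹ := by rw [hG6]
      _ = A^(-p)*B⁻¹ := by group
  have hDeq : D = C⁻¹*C^(-r)*B⁻¹*C := by
    calc D = C⁻¹*C^(-r)*(C^r*(C*D*C⁻¹*B))*B⁻¹*C := by group
      _ = C⁻¹*C^(-r)*1*B⁻¹*C := by rw [hG8]
      _ = C⁻¹*C^(-r)*B⁻¹*C := by group
  have hK : C⁻¹*B*C = A*B*A⁻¹ := by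
    calc C⁻¹*B*C = C⁻¹*(B*(C*A))*A⁻¹ := by group
      _ = C⁻¹*(C*A*B)*A⁻¹ := by rw [← hG2]
      _ = A*B*A⁻¹ := by group
  have h5' : A*(A^(-p)*B⁻¹)*A⁻¹ = (C⁻¹*C^(-r)*B⁻¹*C)⁻¹*(A^(-p)*B⁻¹)*(C⁻¹*C^(-r)*B⁻¹*C) := by
    rw [← hEeq, ← hDeq]; exact hG5
  have s1 : A^(1-p)*B⁻¹*A⁻¹
      = (C⁻¹*B*C)*(C^r*(A^(-p)*B⁻¹)*C^(-r))*(C⁻¹*B*C)⁻¹ := by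
    calc A^(1-p)*B⁻¹*A⁻¹ = A*(A^(-p)*B⁻¹)*A⁻¹ := by group
      _ = (C⁻¹*C^(-r)*B⁻¹*C)⁻¹*(A^(-p)*B⁻¹)*(C⁻¹*C^(-r)*B⁻¹*C) := h5'
      _ = (C⁻¹*B*C)*(C^r*(A^(-p)*B⁻¹)*C^(-r))*(C⁻¹*B*C)⁻¹ := by group
  rw [hK] at s1
  have s2 : C^r*(A^(-p)*B⁻¹)*C^(-r) = (A*B*A⁻¹)⁻¹*(A^(1-p)*B⁻¹*A⁻¹)*(A*B*A⁻¹) := by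
    rw [s1]; group
  have goalKey : C^r*B*A^p = A^(p+1)*B*A⁻¹*C^r := by
    calc C^r*B*A^p = (C^r*(A^(-p)*B⁻¹)*C^(-r))⁻¹ * C^r := by group
      _ = ((A*B*A⁻¹)⁻¹*(A^(1-p)*B⁻¹*A⁻¹)*(A*B*A⁻¹))⁻¹ * C^r := by rw [s2]
      _ = A^(p+1)*B*A⁻¹*C^r := by group
  -- the map G → H
  let fφ : Fin 5 → PresentedGroup (twoGenRel p q r) :=
    ![a, (c*a)^(q+1), c, c⁻¹*c^(-r)*((c*a)^(q+1))⁻¹*c, a^(-p)*((c*a)^(q+1))⁻¹]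
  have hf0 : fφ 0 = a := rfl
  have hf1 : fφ 1 = (c*a)^(q+1) := rfl
  have hf2 : fφ 2 = c := rfl
  have hf3 : fφ 3 = c⁻¹*c^(-r)*((c*a)^(q+1))⁻¹*c := rfl
  have hf4 : fφ 4 = a^(-p)*((c*a)^(q+1))⁻¹ := rfl
  -- the relation in H
  have hρ0 : a^p * (a*c)^(q+1) * c^r * (c^r*(c*a)^(q+1)*a^p)⁻¹ = 1 := by
    have h := rel_one' (rels := twoGenRel p q r)
      (w := (FreeGroup.of true)^p * (FreeGroup.of true * FreeGroup.of false)^(q+1) *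
        (FreeGroup.of false)^r *
        ((FreeGroup.of false)^r * (FreeGroup.of false * FreeGroup.of true)^(q+1) *
          (FreeGroup.of true)^p)⁻¹) (Set.mem_singleton _)
    simp only [map_mul, map_inv, map_zpow, mk_of', ← ha, ← hc] at h
    exact h
  have hacw : (a*c)^(q+1) = c⁻¹*(c*a)^(q+1)*c := by
    rw [mul_zpow_conj' c a (q+1)]; group
  have hawa : a*(c*a)^(q+1)*a⁻¹ = c⁻¹*(c*a)^(q+1)*c := by
    rw [← mul_zpow_conj' a c (q+1)]; exact hacw
  have hawa' : a*((c*a)^(q+1))⁻¹*a⁻¹ = c⁻¹*((c*a)^(q+1))⁻¹*c := by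
    calc a*((c*a)^(q+1))⁻¹*a⁻¹ = (a*(c*a)^(q+1)*a⁻¹)⁻¹ := by group
      _ = (c⁻¹*(c*a)^(q+1)*c)⁻¹ := by rw [hawa]
      _ = c⁻¹*((c*a)^(q+1))⁻¹*c := by group
  rw [hacw] at hρ0
  have keyH : a^p*(c⁻¹*(c*a)^(q+1)*c)*c^r = c^r*(c*a)^(q+1)*a^p := mul_inv_eq_one.mp hρ0
  have key4 : a^p*c⁻¹*(c*a)^(q+1)*c^(r+1) = c^r*(c*a)^(q+1)*a^p := by
    calc a^p*c⁻¹*(c*a)^(q+1)*c^(r+1) = a^p*(c⁻¹*(c*a)^(q+1)*c)*c^r := by group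
      _ = c^r*(c*a)^(q+1)*a^p := keyH
  have key5 : c^(r+1)*a^(-p)
      = ((c*a)^(q+1))⁻¹*c*a^(-p)*c^r*(c*a)^(q+1) := by
    calc c^(r+1)*a^(-p)
        = ((c*a)^(q+1))⁻¹*c*a^(-p)*(a^p*c⁻¹*(c*a)^(q+1)*c^(r+1))*a^(-p) := by group
      _ = ((c*a)^(q+1))⁻¹*c*a^(-p)*(c^r*(c*a)^(q+1)*a^p)*a^(-p) := by rw [key4]
      _ = ((c*a)^(q+1))⁻¹*c*a^(-p)*c^r*(c*a)^(q+1) := by group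
  have L1 : c⁻¹*(c*a)^(q+1)*(c^(r+1)*a^(-p))*((c*a)^(q+1))⁻¹*(c⁻¹*c^(-r)*((c*a)^(q+1))⁻¹*c)
      = a^(-p)*(c⁻¹*((c*a)^(q+1))⁻¹*c) := by
    rw [key5]; group
  have hcommW : (c*a)*(c*a)^(q+1) = (c*a)^(q+1)*(c*a) := ((Commute.refl (c*a)).zpow_right (q+1)).eq
  have hφ : ∀ w ∈ fiveChainRels p q r, FreeGroup.lift fφ w = 1 := by
    intro w hw
    simp only [fiveChainRels, Set.mem_insert_iff, Set.mem_singleton_iff] at hw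
    rcases hw with rfl|rfl|rfl|rfl|rfl|rfl|rfl|rfl <;>
      simp only [map_mul, map_inv, map_zpow, FreeGroup.lift_apply_of, hf0, hf1, hf2, hf3, hf4]
    · -- relator 1
      group
    · -- relator 2
      calc c*a*(c*a)^(q+1)*((c*a)^(q+1)*(c*a))⁻¹
          = ((c*a)*(c*a)^(q+1))*((c*a)^(q+1)*(c*a))⁻¹ := by group
        _ = 1 := by rw [hcommW]; group
    · -- relator 3
      group
    · -- relator 4
      calc c*(c⁻¹*c^(-r)*((c*a)^(q+1))⁻¹*c)*c⁻¹*
            ((a^(-p)*((c*a)^(q+1))⁻¹)⁻¹*(c⁻¹*c^(-r)*((c*a)^(q+1))⁻¹*c)*(a^(-p)*((c*a)^(q+1))⁻¹))⁻¹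
          = c^(-r)*(a^p*c⁻¹*(c*a)^(q+1)*c^(r+1))*(a^(-p)*((c*a)^(q+1))⁻¹) := by group
        _ = c^(-r)*(c^r*(c*a)^(q+1)*a^p)*(a^(-p)*((c*a)^(q+1))⁻¹) := by rw [key4]
        _ = 1 := by group
    · -- relator 5
      calc a*(a^(-p)*((c*a)^(q+1))⁻¹)*a⁻¹*
            ((c⁻¹*c^(-r)*((c*a)^(q+1))⁻¹*c)⁻¹*(a^(-p)*((c*a)^(q+1))⁻¹)*(c⁻¹*c^(-r)*((c*a)^(q+1))⁻¹*c))⁻¹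
          = (a*(a^(-p)*((c*a)^(q+1))⁻¹)*a⁻¹)*
            (c⁻¹*(c*a)^(q+1)*(c^(r+1)*a^(-p))*((c*a)^(q+1))⁻¹*(c⁻¹*c^(-r)*((c*a)^(q+1))⁻¹*c))⁻¹ := by
            group
        _ = (a*(a^(-p)*((c*a)^(q+1))⁻¹)*a⁻¹)*(a^(-p)*(c⁻¹*((c*a)^(q+1))⁻¹*c))⁻¹ := by rw [L1]
        _ = a^(-p)*(a*((c*a)^(q+1))⁻¹*a⁻¹)*(c⁻¹*(c*a)^(q+1)*c)*a^p := by group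
        _ = a^(-p)*(c⁻¹*((c*a)^(q+1))⁻¹*c)*(c⁻¹*(c*a)^(q+1)*c)*a^p := by rw [hawa']
        _ = 1 := by group
    · -- relator 6
      group
    · -- relator 7
      group
    · -- relator 8
      group
  -- the map H → G
  let fψ : Bool → PresentedGroup (fiveChainRels p q r) := fun b => bif b then A else C
  have hg0 : fψ true = A := rfl
  have hg1 : fψ false = C := rfl
  have hψ : ∀ w ∈ twoGenRel p q r, FreeGroup.lift fψ w = 1 := by
    intro w hw
    simp only [twoGenRel, Set.mem_singleton_iff] at hw
    subst hw
    simp only [map_mul, map_inv, map_zpow, FreeGroup.lift_apply_of, hg0, hg1]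
    have hAC : (A*C)^(q+1) = A*B*A⁻¹ := by
      rw [mul_zpow_conj' A C (q+1), ← hG7]
    rw [← hG7, hAC, goalKey]
    group
  have comp1 : ∀ x : Fin 5, (PresentedGroup.toGroup hψ) ((PresentedGroup.toGroup hφ)
      (PresentedGroup.of x)) = PresentedGroup.of x := by
    intro x
    fin_cases x
    · show (PresentedGroup.toGroup hψ) ((PresentedGroup.toGroup hφ)
        (PresentedGroup.of 0)) = PresentedGroup.of 0
      rw [PresentedGroup.toGroup.of, hf0, ha, PresentedGroup.toGroup.of, hg0, hA]
    · show (PresentedGroup.toGroup hψ) ((PresentedGroup.toGroup hφ)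
        (PresentedGroup.of 1)) = PresentedGroup.of 1
      rw [PresentedGroup.toGroup.of, hf1, map_zpow, map_mul, hc, ha,
        PresentedGroup.toGroup.of, PresentedGroup.toGroup.of, hg0, hg1, ← hG7, hB]
    · show (PresentedGroup.toGroup hψ) ((PresentedGroup.toGroup hφ)
        (PresentedGroup.of 2)) = PresentedGroup.of 2
      rw [PresentedGroup.toGroup.of, hf2, hc, PresentedGroup.toGroup.of, hg1, hC]
    · show (PresentedGroup.toGroup hψ) ((PresentedGroup.toGroup hφ)
        (PresentedGroup.of 3)) = PresentedGroup.of 3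
      rw [PresentedGroup.toGroup.of, hf3]
      simp only [map_mul, map_inv, map_zpow]
      rw [hc, ha]
      simp only [PresentedGroup.toGroup.of, hg0, hg1]
      rw [← hG7, ← hDeq, hD]
    · show (PresentedGroup.toGroup hψ) ((PresentedGroup.toGroup hφ)
        (PresentedGroup.of 4)) = PresentedGroup.of 4
      rw [PresentedGroup.toGroup.of, hf4]
      simp only [map_mul, map_inv, map_zpow]
      rw [hc, ha]
      simp only [PresentedGroup.toGroup.of, hg0, hg1]
      rw [← hG7, ← hEeq, hE]
  have comp2 : ∀ x : Bool, (PresentedGroup.toGroup hφ) ((PresentedGroup.toGroup hψ)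
      (PresentedGroup.of x)) = PresentedGroup.of x := by
    intro x
    cases x
    · rw [PresentedGroup.toGroup.of, hg1, hC, PresentedGroup.toGroup.of, hf2, hc]
    · rw [PresentedGroup.toGroup.of, hg0, hA, PresentedGroup.toGroup.of, hf0, ha]
  refine ⟨MonoidHom.toMulEquiv (PresentedGroup.toGroup hφ) (PresentedGroup.toGroup hψ) ?_ ?_⟩
  · exact PresentedGroup.ext fun x => by simpa using comp1 x
  · exact PresentedGroup.ext fun x => by simpa using comp2 x
end
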